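/- arXiv:0805.4083 — 4 statements merged into one kernel-verified Lean document; each statement's English description precedes it below -/
import Mathlib

section
/- Suppose a complete graph K_p on p vertices (all edge weights 1) decomposes as a weight-additive union of complete graphs K_{p₁}, …, K_{p_k}, i.e., there are injective maps φ_i from the vertex set of K_{p_i} into {1,…,p} such that every edge of K_p is covered exactly once: for each pair of distinct vertices a, b in {1,…,p}, exactly one index i has both a and b in the image of φ_i. If p_i ≥ k − 1 for all i, then p + C(k,2) ≥ Σ_{i=1}^{k} p_i, where C(k,2) = k(k−1)/2. -/
/-!
Two distinct vertices lie in at most one block, so distinct blocks share at most one vertex.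
Adding the blocks one at a time, the `j`-th block meets the union of the earlier ones in at
most `j - 1` vertices, so the block sizes exceed the size of the union by at most
`0 + 1 + ⋯ + (k - 1) = C(k, 2)`.
-/

open Finset

section BlockSizes

variable {α ι : Type*} [DecidableEq α]

lemma card_inter_le_one_of_existsUnique {S : ι → Finset α}
    (hcover : ∀ a b : α, a ≠ b → ∃! i, a ∈ S i ∧ b ∈ S i) {i j : ι} (hij : i ≠ j) :
    #(S i ∩ S j) ≤ 1 := by
  by_contra! hlt
  obtain ⟨a, ha, b, hb, hab⟩ := one_lt_card.mp hlt
  rw [mem_inter] at ha hb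
  obtain ⟨_, _, huniq⟩ := hcover a b hab
  exact hij ((huniq i ⟨ha.1, hb.1⟩).trans (huniq j ⟨ha.2, hb.2⟩).symm)

lemma card_inter_biUnion_le_card {S : ι → Finset α} (hS : ∀ i j, i ≠ j → #(S i ∩ S j) ≤ 1)
    {a : ι} {s : Finset ι} (ha : a ∉ s) :
    #(S a ∩ s.biUnion S) ≤ #s :=
  calc #(S a ∩ s.biUnion S) = #(s.biUnion fun i ↦ S a ∩ S i) := by rw [inter_biUnion]
    _ ≤ ∑ i ∈ s, #(S a ∩ S i) := card_biUnion_le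
    _ ≤ ∑ _i ∈ s, 1 := sum_le_sum fun i hi ↦ hS a i (ne_of_mem_of_not_mem hi ha).symm
    _ = #s := by rw [sum_const, smul_eq_mul, mul_one]

variable [DecidableEq ι]

lemma sum_card_le_card_biUnion_add_choose_two {S : ι → Finset α}
    (hS : ∀ i j, i ≠ j → #(S i ∩ S j) ≤ 1) (t : Finset ι) :
    ∑ i ∈ t, #(S i) ≤ #(t.biUnion S) + (#t).choose 2 := by
  induction t using Finset.induction_on with
  | empty => simp
  | insert a s ha ih =>
    have hunion := card_union_add_card_inter (S a) (s.biUnion S)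
    have hinter := card_inter_biUnion_le_card hS ha
    have hchoose : (#s + 1).choose 2 = (#s).choose 2 + #s := by
      rw [Nat.choose_succ_succ', Nat.choose_one_right, add_comm]
    rw [sum_insert ha, biUnion_insert, card_insert_of_notMem ha, hchoose]
    omega

end BlockSizes

theorem stmt_4_general (p k : ℕ)
    (ps : Fin k → ℕ)
    (S : Fin k → Finset (Fin p))
    (hcard : ∀ i, (S i).card = ps i)
    (hcover : ∀ a b : Fin p, a ≠ b → ∃! i : Fin k, a ∈ S i ∧ b ∈ S i) :
    ∑ i, ps i ≤ p + k.choose 2 := by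
  have hS : ∀ i j, i ≠ j → #(S i ∩ S j) ≤ 1 := fun _ _ ↦ card_inter_le_one_of_existsUnique hcover
  calc ∑ i, ps i = ∑ i, #(S i) := by simp only [hcard]
    _ ≤ #(univ.biUnion S) + (#(univ : Finset (Fin k))).choose 2 :=
        sum_card_le_card_biUnion_add_choose_two hS univ
    _ ≤ p + k.choose 2 := by
        rw [card_univ, Fintype.card_fin]
        gcongr
        exact card_le_univ _ |>.trans_eq (Fintype.card_fin p)

/-- if the complete graph `K_p` (all weights 1) decomposes as a
weight-additive union of complete graphs `K_{p₁},…,K_{p_k}` (every edge covered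
exactly once), and all `pᵢ ≥ k − 1`, then `p + C(k,2) ≥ Σ pᵢ`. -/
theorem stmt_4 (p k : ℕ) (hp : 0 < p) (hk : 0 < k)
    (ps : Fin k → ℕ) (hps2 : ∀ i, 2 ≤ ps i) (hpsk : ∀ i, k - 1 ≤ ps i)
    (S : Fin k → Finset (Fin p))
    (hcard : ∀ i, (S i).card = ps i)
    (hcover : ∀ a b : Fin p, a ≠ b → ∃! i : Fin k, a ∈ S i ∧ b ∈ S i) :
    ∑ i, ps i ≤ p + k.choose 2 :=
  stmt_4_general p k ps S hcard hcover
end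

section
/- Let p, k and p₁, …, p_k be positive integers with p_i ≥ max(k−1, 3) for all i and C(p,2) ≥ Σ C(p_i, 2). If p + C(k,2) ≥ Σ p_i, then there exists a family of k subsets S₁, …, S_k of {1, …, p} with |S_i| = p_i such that any two distinct subsets intersect in at most one element. -/
/-!
Take the edges of the complete graph on the `k` indices as points and let `Sᵢ` contain the
`k - 1` edges at `i`, together with `pᵢ - (k - 1)` points private to `i`. Two of the sets
then meet exactly in the edge joining their indices, and only
`Σ (pᵢ - (k - 1)) + C(k, 2) = Σ pᵢ - C(k, 2) ≤ p` points are used.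
-/

open Finset

namespace SimpleGraph

variable {V : Type*} [Fintype V] [DecidableEq V] (G : SimpleGraph V) [DecidableRel G.Adj]

/-- The edges at `v`, as a finset of the edge type rather than of `Sym2 V`. -/
def incidentEdges (v : V) : Finset G.edgeSet := {e | v ∈ (e : Sym2 V)}

theorem card_incidentEdges (v : V) : #(G.incidentEdges v) = G.degree v := by
  rw [← card_incidenceFinset_eq_degree, ← card_map (Function.Embedding.subtype _)]
  congr 1
  ext e
  simp only [incidentEdges, mem_map, mem_filter, mem_univ, true_and,
    Function.Embedding.coe_subtype, mem_incidenceFinset, incidenceSet, Set.mem_ofPred_eq]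
  exact ⟨fun ⟨e', he', he⟩ => he ▸ ⟨e'.2, he'⟩, fun he => ⟨⟨e, he.1⟩, he.2, rfl⟩⟩

theorem card_incidentEdges_inter_le_one {v w : V} (hvw : v ≠ w) :
    #(G.incidentEdges v ∩ G.incidentEdges w) ≤ 1 := by
  refine card_le_one.2 fun e he e' he' => Subtype.ext ?_
  simp only [incidentEdges, mem_inter, mem_filter, mem_univ, true_and] at he he'
  exact ((Sym2.mem_and_mem_iff hvw).1 he).trans ((Sym2.mem_and_mem_iff hvw).1 he').symm

variable (m : V → ℕ)

def incidenceLine (v : V) : Finset ((Σ w, Fin (m w)) ⊕ G.edgeSet) :=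
  (univ.map (Function.Embedding.sigmaMk v)).disjSum (G.incidentEdges v)

theorem card_incidenceLine (v : V) : #(G.incidenceLine m v) = m v + G.degree v := by
  simp [incidenceLine, card_disjSum, card_incidentEdges]

theorem card_incidenceLine_inter_le_one {v w : V} (hvw : v ≠ w) :
    #(G.incidenceLine m v ∩ G.incidenceLine m w) ≤ 1 := by
  have hprivate : univ.map (Function.Embedding.sigmaMk (β := fun w => Fin (m w)) v) ∩
      univ.map (Function.Embedding.sigmaMk w) = ∅ := by
    ext x
    simp only [mem_inter, mem_map, mem_univ, true_and, Function.Embedding.sigmaMk_apply,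
      notMem_empty, iff_false, not_and, forall_exists_index]
    rintro a rfl ⟨b, hb⟩
    exact hvw (congrArg Sigma.fst hb).symm
  rw [← card_toLeft_add_card_toRight, toLeft_inter, toRight_inter]
  simp only [incidenceLine, toLeft_disjSum, toRight_disjSum, hprivate, card_empty, zero_add]
  exact G.card_incidentEdges_inter_le_one hvw

end SimpleGraph

theorem Finset.exists_card_eq_card_inter_le_one {ι α : Type*} [Fintype ι] [DecidableEq ι]
    [Fintype α] [DecidableEq α] (n : ι → ℕ) (hn : ∀ i, Fintype.card ι - 1 ≤ n i)
    (hsum : ∑ i, n i ≤ Fintype.card α + (Fintype.card ι).choose 2) :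
    ∃ S : ι → Finset α, (∀ i, #(S i) = n i) ∧ ∀ i j, i ≠ j → #(S i ∩ S j) ≤ 1 := by
  set c := Fintype.card ι
  let m i := n i - (c - 1)
  have hpairs : c * (c - 1) = 2 * c.choose 2 := by
    rw [Nat.choose_two_right, Nat.mul_div_cancel' (Nat.even_mul_pred_self c).two_dvd]
  have hm : ∑ i, m i = ∑ i, n i - c * (c - 1) := by
    rw [sum_tsub_distrib _ fun i _ => hn i, sum_const, card_univ, smul_eq_mul]
  have hmn : c * (c - 1) ≤ ∑ i, n i := by
    simpa [c] using sum_le_sum fun i (_ : i ∈ univ) => hn i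
  have hcard : Fintype.card ((Σ i, Fin (m i)) ⊕ (⊤ : SimpleGraph ι).edgeSet) ≤ Fintype.card α := by
    rw [Fintype.card_sum, Fintype.card_sigma, ← SimpleGraph.edgeFinset_card,
      SimpleGraph.card_edgeFinset_top_eq_card_choose_two]
    simp only [Fintype.card_fin]
    change ∑ i, m i + c.choose 2 ≤ _
    omega
  obtain ⟨f⟩ := Function.Embedding.nonempty_of_card_le hcard
  refine ⟨fun i => ((⊤ : SimpleGraph ι).incidenceLine m i).map f, fun i => ?_, fun i j hij => ?_⟩
  · rw [card_map, SimpleGraph.card_incidenceLine, SimpleGraph.complete_graph_degree]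
    exact Nat.sub_add_cancel (hn i)
  · rw [← map_inter, card_map]
    exact SimpleGraph.card_incidenceLine_inter_le_one _ m hij

theorem stmt_5_general (p k : ℕ)
    (ps : Fin k → ℕ)
    (hbig : ∀ i, max (k - 1) 3 ≤ ps i)
    (hnum : ∑ i, ps i ≤ p + k.choose 2) :
    ∃ S : Fin k → Finset (Fin p),
      (∀ i, (S i).card = ps i) ∧
      (∀ i j, i ≠ j → (S i ∩ S j).card ≤ 1) :=
  exists_card_eq_card_inter_le_one ps
    (fun i => by simpa using (le_max_left _ _).trans (hbig i))
    (by simpa using hnum)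

/-- existence direction of the deformation `K_p → ∪ K_{pᵢ} + nodes`:
under the numerical conditions one can pack `k` subsets of `{1,…,p}` of sizes
`pᵢ` so that any two distinct subsets share at most one element. -/
theorem stmt_5 (p k : ℕ) (hp : 0 < p) (hk : 0 < k)
    (ps : Fin k → ℕ) (hps : ∀ i, 0 < ps i)
    (hbig : ∀ i, max (k - 1) 3 ≤ ps i)
    (hδ : ∑ i, (ps i).choose 2 ≤ p.choose 2)
    (hnum : ∑ i, ps i ≤ p + k.choose 2) :
    ∃ S : Fin k → Finset (Fin p),
      (∀ i, (S i).card = ps i) ∧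
      (∀ i j, i ≠ j → (S i ∩ S j).card ≤ 1) :=
  stmt_5_general p k ps hbig hnum
end

section
/- For the quasihomogeneous surface singularity x^p + y^{pk} + z² with p even, the signature invariants of the Milnor lattice are μ₀ = p − 2, μ₊ = ((p−2)/2)(pk/2 − 2), μ₋ = (3p−2)pk/4 − (p−1); in particular μ₀ + μ₊ + μ₋ = (p−1)(pk−1). -/
/-!
Write `p = 2(n+1)` and `K = k(n+1) = pk/2`. Then `ℓ(a, b) = t / 2K` with
`t = k(a+1) + (b+1) + K`, so `ℓ` is an integer iff `2K ∣ t`, and `⌊ℓ⌋ = t / 2K`.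
For a fixed `a`, the numerator `t` runs through the `2K - 1` integers strictly between
`x + K` and `x + 3K`, where `x = k(a+1) < 2K`. This window contains exactly one of the
multiples `2K`, `4K` unless `x = K`, and it contains `K - x - 1` non-integral values of
even floor below `2K` and `x - K - 1` above `4K`. The row counts depend only on `|a - n|`,
and summing them gives `μ₀ = 2n` and `μ₊ = n(K - 2)`; `μ₋` is the rest of the
`(p-1)(pk-1)` monomials.
-/

open Finset

lemma Nat.dvd_iff_of_lt_three_mul {d t : ℕ} (ht : t < 3 * d) :
    d ∣ t ↔ t = 0 ∨ t = d ∨ t = 2 * d := by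
  have hq : t / d < 3 := Nat.div_lt_of_lt_mul (by rwa [mul_comm])
  have := Nat.div_add_mod t d
  have := Nat.mod_lt t (show 0 < d by omega)
  rw [Nat.dvd_iff_mod_eq_zero]
  generalize t / d = q at *
  interval_cases q <;> omega

lemma Nat.even_div_iff_of_lt_three_mul {d t : ℕ} (ht : t < 3 * d) :
    Even (t / d) ↔ t < d ∨ 2 * d ≤ t := by
  have hq : t / d < 3 := Nat.div_lt_of_lt_mul (by rwa [mul_comm])
  have := Nat.div_add_mod t d
  have := Nat.mod_lt t (show 0 < d by omega)
  rw [Nat.even_iff]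
  generalize t / d = q at *
  interval_cases q <;> omega

lemma card_filter_dvd_Ico {K x : ℕ} (hx : x < 3 * K) :
    #{t ∈ Ico (x + K + 1) (x + 3 * K) | 2 * K ∣ t} =
      (if x < K then 1 else 0) + (if K < x then 1 else 0) := by
  rw [filter_congr (q := fun t => t = 2 * K ∨ t = 4 * K) fun t ht => by
      rw [Nat.dvd_iff_of_lt_three_mul (by rw [mem_Ico] at ht; omega)]
      rw [mem_Ico] at ht
      omega,
    filter_or, card_union_of_disjoint (disjoint_filter.2 fun t _ h2K h4K => by omega),
    filter_eq', filter_eq']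
  simp only [mem_Ico]
  split_ifs <;> simp only [card_singleton, card_empty] <;> omega

lemma card_filter_not_dvd_even_div_Ico {K x : ℕ} (hx : x ≤ 3 * K) :
    #{t ∈ Ico (x + K + 1) (x + 3 * K) | ¬ 2 * K ∣ t ∧ Even (t / (2 * K))} =
      (K - x - 1) + (x - K - 1) := by
  have hlt : ∀ t ∈ Ico (x + K + 1) (x + 3 * K), t < 3 * (2 * K) := fun t ht => by
    rw [mem_Ico] at ht; omega
  rw [filter_congr fun t ht => by
    rw [Nat.dvd_iff_of_lt_three_mul (hlt t ht), Nat.even_div_iff_of_lt_three_mul (hlt t ht)]]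
  rw [show {t ∈ Ico (x + K + 1) (x + 3 * K) | ¬(t = 0 ∨ t = 2 * K ∨ t = 2 * (2 * K)) ∧
      (t < 2 * K ∨ 2 * (2 * K) ≤ t)} = Ico (x + K + 1) (2 * K) ∪ Ico (4 * K + 1) (x + 3 * K) by
    ext; simp only [mem_filter, mem_Ico, mem_union]; omega]
  rw [card_union_of_disjoint (disjoint_left.2 fun t h1 h2 => by
    rw [mem_Ico] at h1 h2; omega), Nat.card_Ico, Nat.card_Ico]
  omega

lemma card_filter_product_range_add {α : Type*} (A : Finset α) (L : ℕ) (c : α → ℕ)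
    (Q : ℕ → Prop) [DecidablePred Q] :
    #{ab ∈ A ×ˢ range L | Q (c ab.1 + ab.2)} = ∑ a ∈ A, #{t ∈ Ico (c a) (c a + L) | Q t} := by
  rw [card_filter, sum_product]
  refine sum_congr rfl fun a _ => ?_
  rw [show Ico (c a) (c a + L) = (range L).map (addLeftEmbedding (c a)) by
    rw [range_eq_Ico, map_add_left_Ico, add_zero], filter_map, card_map, card_filter]
  rfl

lemma card_filter_add_card_filter_not_and_add_card_filter_not_and {α : Type*} (s : Finset α)
    (P Q : α → Prop) [DecidablePred P] [DecidablePred Q] :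
    #{a ∈ s | P a} + #{a ∈ s | ¬ P a ∧ Q a} + #{a ∈ s | ¬ P a ∧ ¬ Q a} = #s := by
  rw [add_assoc, ← filter_filter, ← filter_filter, card_filter_add_card_filter_not,
    card_filter_add_card_filter_not]

lemma sum_range_two_mul_add_one_tsub_add_tsub {M : Type*} [AddCommMonoid M] (f : ℕ → M)
    (hf : f 0 = 0) (n : ℕ) :
    ∑ a ∈ range (2 * n + 1), (f (n - a) + f (a - n)) = 2 • ∑ i ∈ range n, f (i + 1) := by
  have hsymm : ∑ a ∈ range (2 * n + 1), f (a - n) = ∑ a ∈ range (2 * n + 1), f (n - a) := by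
    rw [← sum_range_reflect]
    refine sum_congr rfl fun a ha => ?_
    rw [mem_range] at ha
    congr 1
    omega
  have hhalf : ∑ a ∈ range (2 * n + 1), f (n - a) = ∑ i ∈ range n, f (i + 1) := by
    have hreflect := sum_range_reflect f (n + 1)
    rw [add_tsub_cancel_right] at hreflect
    have hzero : ∑ x ∈ range n, f (n - (n + 1 + x)) = 0 :=
      sum_eq_zero fun x _ => by rw [Nat.sub_eq_zero_of_le (by omega), hf]
    rw [show 2 * n + 1 = (n + 1) + n by ring, sum_range_add, hreflect, sum_range_succ', hf,
      add_zero, hzero, add_zero]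
  rw [sum_add_distrib, hsymm, hhalf, two_nsmul]

lemma two_mul_sum_range_mul_succ_sub_one_add {k : ℕ} (hk : 0 < k) (n : ℕ) :
    2 * ∑ i ∈ range n, (k * (i + 1) - 1) + 2 * n = k * n * (n + 1) := by
  induction n with
  | zero => simp
  | succ n ih =>
    have hpos : 1 ≤ k * (n + 1) := Nat.one_le_iff_ne_zero.2 (by positivity)
    rw [sum_range_succ]
    zify [hpos] at ih ⊢
    linear_combination ih

/-- The exponents `(a, b)` of the monomials `x^a y^b`, for `p = 2(n+1)`. -/
def milnorGrid (k n : ℕ) : Finset (ℕ × ℕ) :=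
  range (2 * n + 1) ×ˢ range (2 * (k * (n + 1)) - 1)

def spectralNumerator (k n : ℕ) (ab : ℕ × ℕ) : ℕ :=
  k * (ab.1 + 1) + k * (n + 1) + 1 + ab.2

lemma cast_spectralNumerator_div {k : ℕ} (hk : 0 < k) (n : ℕ) (ab : ℕ × ℕ) :
    (spectralNumerator k n ab : ℚ) / ((2 * (k * (n + 1)) : ℕ) : ℚ) =
      ((ab.1 : ℚ) + 1) / ((2 * (n + 1) : ℕ) : ℚ) +
        ((ab.2 : ℚ) + 1) / (((2 * (n + 1) : ℕ) : ℚ) * k) + 1 / 2 := by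
  simp only [spectralNumerator]
  push_cast
  field_simp
  ring

lemma card_milnorGrid (k n : ℕ) :
    #(milnorGrid k n) = (2 * n + 1) * (2 * (k * (n + 1)) - 1) := by
  rw [milnorGrid, card_product, card_range, card_range]

section MilnorGrid

variable {k : ℕ} (hk : 0 < k) (n : ℕ)
include hk

lemma card_filter_milnorGrid_eq_sum (Q : ℕ → Prop) [DecidablePred Q] :
    #{ab ∈ milnorGrid k n | Q (spectralNumerator k n ab)} =
      ∑ a ∈ range (2 * n + 1),
        #{t ∈ Ico (k * (a + 1) + k * (n + 1) + 1) (k * (a + 1) + 3 * (k * (n + 1))) | Q t} := by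
  have hK : 0 < k * (n + 1) := by positivity
  refine (card_filter_product_range_add _ _ (fun a => k * (a + 1) + k * (n + 1) + 1) Q).trans
    (sum_congr rfl fun a _ => ?_)
  rw [show k * (a + 1) + k * (n + 1) + 1 + (2 * (k * (n + 1)) - 1) =
    k * (a + 1) + 3 * (k * (n + 1)) by omega]

lemma card_filter_dvd_spectralNumerator :
    #{ab ∈ milnorGrid k n | 2 * (k * (n + 1)) ∣ spectralNumerator k n ab} = 2 * n := by
  have hrow : ∀ a ∈ range (2 * n + 1),
      #{t ∈ Ico (k * (a + 1) + k * (n + 1) + 1) (k * (a + 1) + 3 * (k * (n + 1))) |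
        2 * (k * (n + 1)) ∣ t} =
      (fun i => if 0 < i then 1 else 0) (n - a) + (fun i => if 0 < i then 1 else 0) (a - n) := by
    intro a ha
    rw [mem_range] at ha
    have hx : k * (a + 1) < 3 * (k * (n + 1)) := by
      rw [mul_left_comm]
      exact Nat.mul_lt_mul_of_pos_left (by omega) hk
    rw [card_filter_dvd_Ico hx]
    simp only [Nat.mul_lt_mul_left hk]
    split_ifs <;> omega
  rw [card_filter_milnorGrid_eq_sum hk, sum_congr rfl hrow,
    sum_range_two_mul_add_one_tsub_add_tsub (fun i => if 0 < i then 1 else 0) rfl]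
  simp [mul_comm]

lemma card_filter_not_dvd_even_div_spectralNumerator :
    #{ab ∈ milnorGrid k n | ¬ 2 * (k * (n + 1)) ∣ spectralNumerator k n ab ∧
        Even (spectralNumerator k n ab / (2 * (k * (n + 1))))} = n * (k * (n + 1) - 2) := by
  have hrow : ∀ a ∈ range (2 * n + 1),
      #{t ∈ Ico (k * (a + 1) + k * (n + 1) + 1) (k * (a + 1) + 3 * (k * (n + 1))) |
        ¬ 2 * (k * (n + 1)) ∣ t ∧ Even (t / (2 * (k * (n + 1))))} =
      (fun i => k * i - 1) (n - a) + (fun i => k * i - 1) (a - n) := by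
    intro a ha
    rw [mem_range] at ha
    have hx : k * (a + 1) ≤ 3 * (k * (n + 1)) := by
      rw [mul_left_comm]
      exact Nat.mul_le_mul_left k (by omega)
    rw [card_filter_not_dvd_even_div_Ico hx, ← Nat.mul_sub, ← Nat.mul_sub, Nat.add_sub_add_right,
      Nat.add_sub_add_right]
  have hgauss := two_mul_sum_range_mul_succ_sub_one_add hk n
  rw [show k * n * (n + 1) = n * (k * (n + 1)) by ring] at hgauss
  rw [card_filter_milnorGrid_eq_sum hk n
      (fun t => ¬ 2 * (k * (n + 1)) ∣ t ∧ Even (t / (2 * (k * (n + 1))))),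
    sum_congr rfl hrow, sum_range_two_mul_add_one_tsub_add_tsub (fun i => k * i - 1) rfl,
    smul_eq_mul, Nat.mul_sub]
  omega

lemma card_filter_not_dvd_not_even_div_spectralNumerator :
    #{ab ∈ milnorGrid k n | ¬ 2 * (k * (n + 1)) ∣ spectralNumerator k n ab ∧
        ¬ Even (spectralNumerator k n ab / (2 * (k * (n + 1))))} =
      (3 * n + 2) * (k * (n + 1)) - (2 * n + 1) := by
  have hpart := card_filter_add_card_filter_not_and_add_card_filter_not_and (milnorGrid k n)
    (fun ab => 2 * (k * (n + 1)) ∣ spectralNumerator k n ab)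
    (fun ab => Even (spectralNumerator k n ab / (2 * (k * (n + 1)))))
  rw [card_filter_dvd_spectralNumerator hk, card_filter_not_dvd_even_div_spectralNumerator hk,
    card_milnorGrid] at hpart
  have h2n : n * 2 ≤ n * (k * (n + 1)) := by
    rcases n.eq_zero_or_pos with rfl | hn
    · simp
    · exact Nat.mul_le_mul_left n (by nlinarith)
  have hprod : (2 * n + 1) * (2 * (k * (n + 1)) - 1) =
      4 * (n * (k * (n + 1))) + 2 * (k * (n + 1)) - (2 * n + 1) := by
    rw [Nat.mul_sub, mul_one]
    ring_nf
  rw [Nat.mul_sub, hprod] at hpart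
  rw [add_mul, mul_assoc]
  omega

end MilnorGrid

/-- signature invariants of the Milnor lattice of
`x^p + y^{pk} + z²` for `p` even, via Steenbrink's count of monomials
`x^a y^b` (`0 ≤ a ≤ p−2`, `0 ≤ b ≤ pk−2`) classified by
`ℓ = (a+1)/p + (b+1)/(pk) + 1/2`. -/
theorem stmt_12 (p k : ℕ) (hp : 2 ≤ p) (hpeven : Even p) (hk : 1 ≤ k) :
    let ℓ : ℕ × ℕ → ℚ :=
      fun ab => ((ab.1 : ℚ) + 1) / p + ((ab.2 : ℚ) + 1) / (p * k) + 1/2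
    let S := Finset.range (p - 1) ×ˢ Finset.range (p * k - 1)
    ((S.filter (fun ab => (ℓ ab).den = 1)).card = p - 2) ∧
    ((S.filter (fun ab => (ℓ ab).den ≠ 1 ∧ Even ⌊ℓ ab⌋)).card
        = ((p - 2) / 2) * (p * k / 2 - 2)) ∧
    ((S.filter (fun ab => (ℓ ab).den ≠ 1 ∧ ¬ Even ⌊ℓ ab⌋)).card
        = (3 * p - 2) * p * k / 4 - (p - 1)) ∧
    ((p - 2) + ((p - 2) / 2) * (p * k / 2 - 2)
        + ((3 * p - 2) * p * k / 4 - (p - 1)) = (p - 1) * (p * k - 1)) := by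
  intro ℓ S
  obtain ⟨n, rfl⟩ : ∃ n, p = 2 * (n + 1) := ⟨p / 2 - 1, by obtain ⟨m, hm⟩ := hpeven; omega⟩
  have hK : 2 * (k * (n + 1)) ≠ 0 := by positivity
  have hℓ (ab : ℕ × ℕ) :
      ℓ ab = (spectralNumerator k n ab : ℚ) / ((2 * (k * (n + 1)) : ℕ) : ℚ) :=
    (cast_spectralNumerator_div hk n ab).symm
  have hS : S = milnorGrid k n := by
    simp only [S, milnorGrid]
    congr 2
    ring_nf
  simp only [hS, hℓ, ne_eq, Rat.den_div_natCast_eq_one_iff _ _ hK, Rat.floor_natCast_div_natCast,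
    ← Int.natCast_div, Int.even_coe_nat]
  have hquarter : (3 * (2 * (n + 1)) - 2) * (2 * (n + 1)) * k / 4 =
      (3 * n + 2) * (k * (n + 1)) := by
    rw [show 3 * (2 * (n + 1)) - 2 = 2 * (3 * n + 2) by omega,
      show 2 * (3 * n + 2) * (2 * (n + 1)) * k = 4 * ((3 * n + 2) * (k * (n + 1))) by ring]
    omega
  have htotal := card_filter_add_card_filter_not_and_add_card_filter_not_and (milnorGrid k n)
    (fun ab => 2 * (k * (n + 1)) ∣ spectralNumerator k n ab)
    (fun ab => Even (spectralNumerator k n ab / (2 * (k * (n + 1)))))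
  rw [card_filter_dvd_spectralNumerator hk, card_filter_not_dvd_even_div_spectralNumerator hk,
    card_filter_not_dvd_not_even_div_spectralNumerator hk, card_milnorGrid] at htotal
  rw [hquarter, show 2 * (n + 1) * k = 2 * (k * (n + 1)) by ring, Nat.mul_div_cancel_left _ two_pos,
    show 2 * (n + 1) - 2 = 2 * n by omega, show 2 * (n + 1) - 1 = 2 * n + 1 by omega,
    Nat.mul_div_cancel_left _ two_pos, card_filter_dvd_spectralNumerator hk,
    card_filter_not_dvd_even_div_spectralNumerator hk,
    card_filter_not_dvd_not_even_div_spectralNumerator hk]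
  exact ⟨rfl, rfl, rfl, htotal⟩
end

section
/- For the quasihomogeneous surface singularity x^p + y^{pk} + z² with p odd and k odd, μ₀ = 0, μ₊ = ((p−1)/2)²k − (p−1)/2, and μ₋ = (p−1)(3pk + k − 2)/4; these sum to the Milnor number (p−1)(pk−1). -/
open Finset

private lemma count_interval13 (n c d : ℕ) (hcd : c ≤ d) :
    ((Finset.range n).filter (fun b => b < c ∨ d ≤ b)).card = min c n + (n - d) := by
  have h : (Finset.range n).filter (fun b => b < c ∨ d ≤ b)
      = Finset.range (min c n) ∪ Finset.Ico d n := by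
    ext x
    simp only [Finset.mem_filter, Finset.mem_range, Finset.mem_union, Finset.mem_Ico]
    omega
  have hdisj : Disjoint (Finset.range (min c n)) (Finset.Ico d n) := by
    rw [Finset.disjoint_left]
    intro x hx hx'
    simp only [Finset.mem_range] at hx
    simp only [Finset.mem_Ico] at hx'
    omega
  rw [h, Finset.card_union_of_disjoint hdisj, Finset.card_range, Nat.card_Ico]

/-- signature invariants of the Milnor lattice of
`x^p + y^{pk} + z²` for `p` odd and `k` odd: `μ₀ = 0`,
`μ₊ = ((p−1)/2)²k − (p−1)/2`, `μ₋ = (p−1)(3pk+k−2)/4`, summing to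
`(p−1)(pk−1)`. -/
theorem stmt_13 (p k : ℕ) (hp : 2 ≤ p) (hpodd : Odd p) (hk : 1 ≤ k)
    (hkodd : Odd k) :
    let ℓ : ℕ × ℕ → ℚ :=
      fun ab => ((ab.1 : ℚ) + 1) / p + ((ab.2 : ℚ) + 1) / (p * k) + 1/2
    let S := Finset.range (p - 1) ×ˢ Finset.range (p * k - 1)
    ((S.filter (fun ab => (ℓ ab).den = 1)).card = 0) ∧
    ((S.filter (fun ab => (ℓ ab).den ≠ 1 ∧ Even ⌊ℓ ab⌋)).card
        = ((p - 1) / 2) ^ 2 * k - (p - 1) / 2) ∧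
    ((S.filter (fun ab => (ℓ ab).den ≠ 1 ∧ ¬ Even ⌊ℓ ab⌋)).card
        = (p - 1) * (3 * p * k + k - 2) / 4) ∧
    (0 + (((p - 1) / 2) ^ 2 * k - (p - 1) / 2)
        + (p - 1) * (3 * p * k + k - 2) / 4 = (p - 1) * (p * k - 1)) := by
  intro ℓ S
  have hpo : p % 2 = 1 := Nat.odd_iff.mp hpodd
  have hko : k % 2 = 1 := Nat.odd_iff.mp hkodd
  set m := (p - 1) / 2 with hmdef
  set t := (k - 1) / 2 with htdef
  have hm : p = 2 * m + 1 := by omega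
  have ht : k = 2 * t + 1 := by omega
  have hm1 : 1 ≤ m := by omega
  have hY1 : 1 ≤ p * k := Nat.one_le_iff_ne_zero.mpr (by positivity)
  have hYodd : p * k % 2 = 1 := Nat.odd_iff.mp (hpodd.mul hkodd)
  have hp0 : (p : ℚ) ≠ 0 := Nat.cast_ne_zero.mpr (by omega)
  have hk0 : (k : ℚ) ≠ 0 := Nat.cast_ne_zero.mpr (by omega)
  -- key pointwise lemma
  have key : ∀ a b : ℕ, a < p - 1 → b < p * k - 1 →
      (ℓ (a, b)).den ≠ 1 ∧
      (Even ⌊ℓ (a, b)⌋ ↔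
        (2 * (k * (a + 1) + b + 1) < p * k ∨ 3 * (p * k) ≤ 2 * (k * (a + 1) + b + 1))) := by
    intro a b ha hb
    have hXk : k ≤ k * (a + 1) := Nat.le_mul_of_pos_right k (by omega)
    have hXY : k * (a + 1) + k ≤ p * k := by
      have h1 : k * (a + 1 + 1) ≤ k * p := Nat.mul_le_mul_left k (by omega)
      have h2 : k * (a + 1 + 1) = k * (a + 1) + k := by ring
      have h3 : k * p = p * k := Nat.mul_comm k p
      omega
    have hbY : b + 1 < p * k := by omega
    set N : ℕ := 2 * (k * (a + 1) + b + 1) + p * k with hN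
    have hℓeq : ℓ (a, b) = (N : ℚ) / ((2 * (p * k) : ℕ) : ℚ) := by
      show ((a : ℚ) + 1) / p + ((b : ℚ) + 1) / (p * k) + 1 / 2 = _
      rw [hN]
      push_cast
      field_simp
      ring
    have h2Y : (0 : ℚ) < ((2 * (p * k) : ℕ) : ℚ) := by
      have : 0 < 2 * (p * k) := by omega
      exact_mod_cast this
    have hden : (ℓ (a, b)).den ≠ 1 := by
      intro hden1
      obtain ⟨z, hz⟩ : ∃ z : ℤ, ℓ (a, b) = (z : ℚ) :=
        ⟨(ℓ (a, b)).num, ((Rat.den_eq_one_iff _).mp hden1).symm⟩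
      rw [hℓeq, div_eq_iff (ne_of_gt h2Y)] at hz
      have h4 : (N : ℤ) = z * ((2 * (p * k) : ℕ) : ℤ) := by exact_mod_cast hz
      have h5 : (2 : ℤ) ∣ (N : ℤ) := by
        rw [h4]
        exact Dvd.dvd.mul_left ⟨((p * k : ℕ) : ℤ), by push_cast; ring⟩ _
      have h6 : 2 ∣ N := by exact_mod_cast h5
      omega
    refine ⟨hden, ?_⟩
    have hfloor : ∀ z : ℤ, z * (2 * ((p * k : ℕ) : ℤ)) ≤ (N : ℤ) →
        (N : ℤ) < (z + 1) * (2 * ((p * k : ℕ) : ℤ)) → ⌊ℓ (a, b)⌋ = z := by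
      intro z h1 h2
      rw [hℓeq, Int.floor_eq_iff, le_div_iff₀ h2Y, div_lt_iff₀ h2Y]
      constructor
      · exact_mod_cast h1
      · exact_mod_cast h2
    have hub : N < 6 * (p * k) := by omega
    rcases lt_or_ge N (2 * (p * k)) with hc | hc
    · have hfl : ⌊ℓ (a, b)⌋ = 0 := by
        apply hfloor 0
        · simp
        · push_cast; omega
      rw [hfl]
      simp only [Even.zero, true_iff]
      left; omega
    · rcases lt_or_ge N (4 * (p * k)) with hc2 | hc2
      · have hfl : ⌊ℓ (a, b)⌋ = 1 := by
          apply hfloor 1 <;> push_cast <;> omega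
        rw [hfl]
        constructor
        · intro h'; exact absurd h' (by decide)
        · intro h'; exfalso; omega
      · have hfl : ⌊ℓ (a, b)⌋ = 2 := by
          apply hfloor 2 <;> push_cast <;> omega
        rw [hfl]
        simp only [even_two, true_iff]
        right; omega
  have hSmem : ∀ ab : ℕ × ℕ, ab ∈ S → ab.1 < p - 1 ∧ ab.2 < p * k - 1 := by
    intro ab hab
    simpa [S, Finset.mem_product] using hab
  -- μ₀ = 0
  have h0 : (S.filter (fun ab => (ℓ ab).den = 1)).card = 0 := by
    rw [Finset.card_eq_zero, Finset.filter_eq_empty_iff]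
    intro ab hab
    obtain ⟨h1, h2⟩ := hSmem ab hab
    exact (key ab.1 ab.2 h1 h2).1
  -- μ₊ computation
  have hQfilter : S.filter (fun ab => (ℓ ab).den ≠ 1 ∧ Even ⌊ℓ ab⌋)
      = S.filter (fun ab => 2 * (k * (ab.1 + 1) + ab.2 + 1) < p * k ∨
          3 * (p * k) ≤ 2 * (k * (ab.1 + 1) + ab.2 + 1)) := by
    apply Finset.filter_congr
    intro ab hab
    obtain ⟨h1, h2⟩ := hSmem ab hab
    have hk2 := key ab.1 ab.2 h1 h2
    constructor
    · rintro ⟨-, h⟩; exact hk2.2.mp h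
    · intro h; exact ⟨hk2.1, hk2.2.mpr h⟩
  have hsum : (S.filter (fun ab => 2 * (k * (ab.1 + 1) + ab.2 + 1) < p * k ∨
          3 * (p * k) ≤ 2 * (k * (ab.1 + 1) + ab.2 + 1))).card
      = ∑ a ∈ Finset.range (p - 1),
          ((Finset.range (p * k - 1)).filter
            (fun b => 2 * (k * (a + 1) + b + 1) < p * k ∨
              3 * (p * k) ≤ 2 * (k * (a + 1) + b + 1))).card := by
    rw [Finset.card_filter]
    show ∑ ab ∈ Finset.range (p-1) ×ˢ Finset.range (p*k-1), _ = _
    rw [Finset.sum_product]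
    exact Finset.sum_congr rfl fun a _ => (Finset.card_filter _ _).symm
  have hper : ∀ a ∈ Finset.range (p - 1),
      ((Finset.range (p * k - 1)).filter
        (fun b => 2 * (k * (a + 1) + b + 1) < p * k ∨
          3 * (p * k) ≤ 2 * (k * (a + 1) + b + 1))).card
      = if a < m then k * m - k * a - (t + 1) else k * a - k * m + t := by
    intro a ha
    rw [Finset.mem_range] at ha
    have hXk : k ≤ k * (a + 1) := Nat.le_mul_of_pos_right k (by omega)
    have hXY : k * (a + 1) + k ≤ p * k := by
      have h1 : k * (a + 1 + 1) ≤ k * p := Nat.mul_le_mul_left k (by omega)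
      have h2 : k * (a + 1 + 1) = k * (a + 1) + k := by ring
      have h3 : k * p = p * k := Nat.mul_comm k p
      omega
    have hX2 : k * (a + 1) = k * a + k := by ring
    have hYm : p * k = 2 * (k * m) + k := by rw [hm]; ring
    have hpred : ∀ b, (2 * (k * (a + 1) + b + 1) < p * k ∨
          3 * (p * k) ≤ 2 * (k * (a + 1) + b + 1))
        ↔ (b < (p * k - 2 * (k * (a + 1)) - 1) / 2 ∨
            (3 * (p * k) - 2 * (k * (a + 1)) - 1) / 2 ≤ b) := by
      intro b
      omega
    rw [Finset.filter_congr (fun b _ => hpred b), count_interval13 _ _ _ (by omega)]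
    by_cases ham : a < m
    · rw [if_pos ham]
      have hka : k * a + k ≤ k * m := by
        have := Nat.mul_le_mul_left k (show a + 1 ≤ m by omega)
        omega
      omega
    · rw [if_neg ham]
      have hka : k * m + k ≤ k * a + k := by
        have := Nat.mul_le_mul_left k (show m ≤ a by omega)
        omega
      have hka2 : k * a + k ≤ 2 * (k * m) := by
        have h1 : k * (a + 1) ≤ k * (2 * m) := Nat.mul_le_mul_left k (by omega)
        have h2 : k * (2 * m) = 2 * (k * m) := by ring
        omega
      omega
  have hgauss : (∑ i ∈ Finset.range m, i) * 2 = m * (m - 1) := Finset.sum_range_id_mul_two m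
  have hsum2 : ∑ a ∈ Finset.range (p - 1),
      (if a < m then k * m - k * a - (t + 1) else k * a - k * m + t) = m ^ 2 * k - m := by
    have hrange : p - 1 = 2 * m := by omega
    rw [hrange, Finset.range_eq_Ico,
      ← Finset.sum_Ico_consecutive _ (Nat.zero_le m) (show m ≤ 2 * m by omega)]
    have e1 : ∑ a ∈ Finset.Ico 0 m,
        (if a < m then k * m - k * a - (t + 1) else k * a - k * m + t)
        = ∑ i ∈ Finset.range m, (k * i + t) := by
      rw [← Finset.range_eq_Ico, ← Finset.sum_range_reflect]
      apply Finset.sum_congr rfl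
      intro i hi
      rw [Finset.mem_range] at hi
      rw [if_pos (show m - 1 - i < m by omega)]
      have h2 : k * (m - 1 - i) + k * (i + 1) = k * m := by
        rw [← Nat.mul_add]; congr 1; omega
      have h3 : k * (i + 1) = k * i + k := by ring
      omega
    have e2 : ∑ a ∈ Finset.Ico m (2 * m),
        (if a < m then k * m - k * a - (t + 1) else k * a - k * m + t)
        = ∑ i ∈ Finset.range m, (k * i + t) := by
      rw [Finset.sum_Ico_eq_sum_range]
      rw [show 2 * m - m = m by omega]
      apply Finset.sum_congr rfl
      intro i hi
      rw [if_neg (by omega)]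
      have h2 : k * (m + i) = k * m + k * i := by ring
      omega
    rw [e1, e2]
    have e3 : ∑ i ∈ Finset.range m, (k * i + t)
        = k * (∑ i ∈ Finset.range m, i) + m * t := by
      rw [Finset.sum_add_distrib, Finset.mul_sum, Finset.sum_const, Finset.card_range,
        smul_eq_mul]
    rw [e3]
    have hmm : m ≤ m * m := Nat.le_mul_of_pos_left m (by omega)
    have hg2 : (∑ i ∈ Finset.range m, i) * 2 = m * m - m := by
      rw [Finset.sum_range_id_mul_two]
      rcases m with _ | n
      · rfl
      · have h1 : (n + 1) * (n + 1) = (n + 1) * n + (n + 1) := by ring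
        have h2 : (n + 1) * (n + 1 - 1) = (n + 1) * n := by norm_num
        omega
    have hm2k : m ≤ m ^ 2 * k := by
      have h1 : m * 1 * 1 ≤ m * m * k := Nat.mul_le_mul (Nat.mul_le_mul le_rfl hm1) hk
      have h2 : m ^ 2 * k = m * m * k := by ring
      omega
    have hktz : (k : ℤ) = 2 * (t : ℤ) + 1 := by exact_mod_cast ht
    zify [hmm] at hg2
    zify [hm2k]
    push_cast at hg2 ⊢
    linear_combination (k : ℤ) * hg2 - (m : ℤ) * hktz
  have hpos : (S.filter (fun ab => (ℓ ab).den ≠ 1 ∧ Even ⌊ℓ ab⌋)).card = m ^ 2 * k - m := by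
    rw [hQfilter, hsum, Finset.sum_congr rfl hper, hsum2]
  -- μ₋
  have hScard : S.card = (p - 1) * (p * k - 1) := by
    simp [S, Finset.card_product]
  have hcompl : (S.filter (fun ab => (ℓ ab).den ≠ 1 ∧ ¬ Even ⌊ℓ ab⌋)).card
      = S.card - (S.filter (fun ab => (ℓ ab).den ≠ 1 ∧ Even ⌊ℓ ab⌋)).card := by
    have h := Finset.card_filter_add_card_filter_not
      (s := S) (p := fun ab => (ℓ ab).den ≠ 1 ∧ Even ⌊ℓ ab⌋)
    have heq : S.filter (fun ab => ¬ ((ℓ ab).den ≠ 1 ∧ Even ⌊ℓ ab⌋))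
        = S.filter (fun ab => (ℓ ab).den ≠ 1 ∧ ¬ Even ⌊ℓ ab⌋) := by
      apply Finset.filter_congr
      intro ab hab
      obtain ⟨h1, h2⟩ := hSmem ab hab
      have hd := (key ab.1 ab.2 h1 h2).1
      constructor
      · intro h'
        exact ⟨hd, fun he => h' ⟨hd, he⟩⟩
      · rintro ⟨-, hne⟩ ⟨-, he⟩
        exact hne he
    rw [heq] at h
    omega
  -- arithmetic facts
  have hmk : m ≤ m * k := Nat.le_mul_of_pos_right m (by omega)
  have hmmk : m * m * k = m * (m * k) := by ring
  have hpow : m ^ 2 * k = m * m * k := by ring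
  have hmmk2 : m ≤ m * m * k := by
    have h1 : m * 1 ≤ m * (m * k) := Nat.mul_le_mul_left m (by
      have := Nat.mul_le_mul hm1 hk
      omega)
    omega
  have hμm : (p - 1) * (3 * p * k + k - 2) / 4 = 3 * (m * m * k) + 2 * (m * k) - m := by
    have h4 : (p - 1) * (3 * p * k + k - 2) = (3 * (m * m * k) + 2 * (m * k) - m) * 4 := by
      have hA : 3 * p * k = 6 * (m * k) + 3 * k := by rw [hm]; ring
      have hB : p - 1 = 2 * m := by omega
      rw [hB]
      zify [show 2 ≤ 3 * p * k + k by omega, show m ≤ 3 * (m * m * k) + 2 * (m * k) by omega]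
      have hA' : (3 : ℤ) * p * k = 6 * (m * k) + 3 * k := by exact_mod_cast hA
      push_cast at hA' ⊢
      rw [hA']
      ring
    rw [h4, Nat.mul_div_cancel _ (by norm_num)]
  have hScard2 : (p - 1) * (p * k - 1) = 4 * (m * m * k) + 2 * (m * k) - 2 * m := by
    have hB : p - 1 = 2 * m := by omega
    have hA : p * k = 2 * (m * k) + k := by rw [hm]; ring
    rw [hB]
    zify [hY1, show 2 * m ≤ 4 * (m * m * k) + 2 * (m * k) by omega]
    have hA' : (p : ℤ) * k = 2 * (m * k) + k := by exact_mod_cast hA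
    push_cast at hA' ⊢
    rw [hA']
    ring
  refine ⟨h0, hpos, ?_, ?_⟩
  · rw [hcompl, hpos, hScard, hScard2, hμm]
    omega
  · rw [hμm, hScard2]
    omega
end
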